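/- The integral ∫₀^∞ e^{-(x + r/x)} dx equals 2√r·K₁(2√r) for every r > 0, where K₁ is the modified Bessel function of the second kind of order 1. -/
import Mathlib


open MeasureTheory ProbabilityTheory Real Set Filter Topology Asymptotics

/-- Modified Bessel function of the second kind of order 1, via the integral
representation `K₁(x) = ∫₀^∞ exp (-x * cosh t) * cosh t dt`. -/
noncomputable def besselK1 (x : ℝ) : ℝ :=
  ∫ t in Set.Ioi (0 : ℝ), Real.exp (-x * Real.cosh t) * Real.cosh t

/-- Gradshteyn–Ryzhik 3.471.9 (special case):
`∫₀^∞ e^{-(x + r/x)} dx = 2√r·K₁(2√r)` for `r > 0`. -/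
theorem integral_exp_neg_add_div (r : ℝ) (hr : 0 < r) :
    ∫ x in Set.Ioi (0 : ℝ), Real.exp (-(x + r / x)) =
      2 * Real.sqrt r * besselK1 (2 * Real.sqrt r) := by
  set c := Real.sqrt r with hcdef
  have hc0 : 0 < c := Real.sqrt_pos.mpr hr
  have hcc : c * c = r := Real.mul_self_sqrt hr.le
  set f : ℝ → ℝ := fun x => Real.exp (-(x + r / x)) with hf
  have hfm : Measurable f := by
    apply Real.measurable_exp.comp
    exact (measurable_id.add (measurable_const.div measurable_id)).neg
  -- integrability on the pieces
  have hint1 : IntegrableOn f (Ioo 0 c) := by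
    apply Measure.integrableOn_of_bounded (M := 1) measure_Ioo_lt_top.ne
      hfm.aestronglyMeasurable
    filter_upwards [ae_restrict_mem measurableSet_Ioo] with x hx
    rw [Real.norm_eq_abs, abs_of_pos (Real.exp_pos _)]
    rw [Real.exp_le_one_iff, neg_nonpos]
    have h1 : 0 < x := hx.1
    positivity
  have hint2 : IntegrableOn f (Ioi c) := by
    apply (exp_neg_integrableOn_Ioi c (b := 1) one_pos).mono' hfm.aestronglyMeasurable
    filter_upwards [ae_restrict_mem measurableSet_Ioi] with x hx
    rw [Real.norm_eq_abs, abs_of_pos (Real.exp_pos _)]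
    apply Real.exp_le_exp.mpr
    have hx0 : 0 < x := hc0.trans hx
    have : 0 ≤ r / x := by positivity
    nlinarith
  -- images
  have himg1 : (fun t : ℝ => c * Real.exp t) '' Ioi 0 = Ioi c := by
    ext x
    constructor
    · rintro ⟨t, ht, rfl⟩
      have : 1 < Real.exp t := by
        rw [← Real.exp_zero]; exact Real.exp_lt_exp.mpr (mem_Ioi.mp ht)
      simpa using (mul_lt_mul_of_pos_left this hc0)
    · intro hx
      have hx0 : 0 < x := hc0.trans hx
      refine ⟨Real.log (x / c), ?_, ?_⟩
      · exact Real.log_pos ((one_lt_div hc0).mpr hx)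
      · show c * Real.exp (Real.log (x / c)) = x
        rw [Real.exp_log (by positivity)]
        field_simp
  have himg2 : (fun t : ℝ => c * Real.exp (-t)) '' Ioi 0 = Ioo 0 c := by
    ext x
    constructor
    · rintro ⟨t, ht, rfl⟩
      constructor
      · positivity
      · have : Real.exp (-t) < 1 := Real.exp_lt_one_iff.mpr (by simpa using mem_Ioi.mp ht)
        simpa using (mul_lt_mul_of_pos_left this hc0)
    · rintro ⟨hx0, hxc⟩
      refine ⟨Real.log (c / x), ?_, ?_⟩
      · exact Real.log_pos ((one_lt_div hx0).mpr hxc)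
      · show c * Real.exp (-Real.log (c / x)) = x
        rw [← Real.log_inv, Real.exp_log (by positivity)]
        field_simp
  -- change of variables on (c, ∞)
  have hderiv1 : ∀ t ∈ Ioi (0:ℝ), HasDerivWithinAt (fun t => c * Real.exp t)
      (c * Real.exp t) (Ioi 0) t := fun t _ =>
    ((Real.hasDerivAt_exp t).const_mul c).hasDerivWithinAt
  have hinj1 : InjOn (fun t : ℝ => c * Real.exp t) (Ioi 0) := fun a _ b _ h =>
    Real.exp_injective (mul_left_cancel₀ hc0.ne' h)
  have hCOV1 : ∫ x in Ioi c, f x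
      = ∫ t in Ioi (0:ℝ), |c * Real.exp t| • f (c * Real.exp t) := by
    rw [← himg1]
    exact integral_image_eq_integral_abs_deriv_smul measurableSet_Ioi hderiv1 hinj1 f
  have hI1 : IntegrableOn (fun t => |c * Real.exp t| • f (c * Real.exp t)) (Ioi 0) := by
    rw [← integrableOn_image_iff_integrableOn_abs_deriv_smul measurableSet_Ioi hderiv1 hinj1 f,
      himg1]
    exact hint2
  -- change of variables on (0, c)
  have hderiv2 : ∀ t ∈ Ioi (0:ℝ), HasDerivWithinAt (fun t => c * Real.exp (-t))
      (c * (Real.exp (-t) * -1)) (Ioi 0) t := by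
    intro t _
    have h := ((Real.hasDerivAt_exp (-t)).comp t (hasDerivAt_neg t)).const_mul c
    simpa using h.hasDerivWithinAt
  have hinj2 : InjOn (fun t : ℝ => c * Real.exp (-t)) (Ioi 0) := fun a _ b _ h => by
    have := Real.exp_injective (mul_left_cancel₀ hc0.ne' h)
    linarith [neg_injective this]
  have hCOV2 : ∫ x in Ioo 0 c, f x
      = ∫ t in Ioi (0:ℝ), |c * (Real.exp (-t) * -1)| • f (c * Real.exp (-t)) := by
    rw [← himg2]
    exact integral_image_eq_integral_abs_deriv_smul measurableSet_Ioi hderiv2 hinj2 f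
  have hI2 : IntegrableOn (fun t => |c * (Real.exp (-t) * -1)| • f (c * Real.exp (-t)))
      (Ioi 0) := by
    rw [← integrableOn_image_iff_integrableOn_abs_deriv_smul measurableSet_Ioi hderiv2 hinj2 f,
      himg2]
    exact hint1
  -- split the integral
  have hsplit : ∫ x in Ioi (0:ℝ), f x = (∫ x in Ioo 0 c, f x) + ∫ x in Ioi c, f x := by
    rw [← Ioc_union_Ioi_eq_Ioi hc0.le,
      setIntegral_union (Ioc_disjoint_Ioi le_rfl) measurableSet_Ioi
        (hint1.congr_set_ae Ioo_ae_eq_Ioc.symm) hint2,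
      integral_Ioc_eq_integral_Ioo]
  -- pointwise identity
  have hpt : ∀ t : ℝ,
      |c * (Real.exp (-t) * -1)| • f (c * Real.exp (-t)) + |c * Real.exp t| • f (c * Real.exp t)
      = 2 * c * (Real.exp (-(2 * c) * Real.cosh t) * Real.cosh t) := by
    intro t
    have he : (0:ℝ) < Real.exp t := Real.exp_pos t
    have he' : (0:ℝ) < Real.exp (-t) := Real.exp_pos _
    have h1 : r / (c * Real.exp t) = c * Real.exp (-t) := by
      rw [← hcc, Real.exp_neg]
      field_simp
    have h2 : r / (c * Real.exp (-t)) = c * Real.exp t := by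
      rw [← hcc, Real.exp_neg]
      field_simp
    simp only [hf, h1, h2, smul_eq_mul, abs_of_pos, Real.cosh_eq]
    rw [abs_of_nonpos (by nlinarith), abs_of_pos (by positivity)]
    have harg : -(c * Real.exp (-t) + c * Real.exp t) =
        -(2 * c) * ((Real.exp t + Real.exp (-t)) / 2) := by ring
    have harg' : -(c * Real.exp t + c * Real.exp (-t)) =
        -(2 * c) * ((Real.exp t + Real.exp (-t)) / 2) := by ring
    rw [harg, harg']
    ring
  calc ∫ x in Ioi (0:ℝ), f x
      = (∫ x in Ioo 0 c, f x) + ∫ x in Ioi c, f x := hsplit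
    _ = ∫ t in Ioi (0:ℝ), (|c * (Real.exp (-t) * -1)| • f (c * Real.exp (-t))
          + |c * Real.exp t| • f (c * Real.exp t)) := by
        rw [hCOV1, hCOV2, ← integral_add hI2 hI1]
    _ = ∫ t in Ioi (0:ℝ), 2 * c * (Real.exp (-(2 * c) * Real.cosh t) * Real.cosh t) := by
        congr 1
        funext t
        exact hpt t
    _ = 2 * c * besselK1 (2 * c) := by
        rw [besselK1, ← integral_const_mul]
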